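/- Let p : Fin 4 → ℝ² be a quadrilateral in general position with Q-value Q. Then Q = 4 if and only if the quadrilateral is convex, in the sense that its two open diagonals intersect: openSegment ℝ (p 0) (p 2) ∩ openSegment ℝ (p 1) (p 3) ≠ ∅. -/
import Mathlib


/-- The cross value of three points in the plane: the z-coordinate of the
cross product `(b - a) × (c - b)`. -/
noncomputable def cross (a b c : ℝ × ℝ) : ℝ :=
  (b.1 - a.1) * (c.2 - b.2) - (b.2 - a.2) * (c.1 - b.1)

/-- A quadrilateral `p : Fin 4 → ℝ²` is in general position if no three of its
four points are collinear. -/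
def GeneralPosition (p : Fin 4 → ℝ × ℝ) : Prop :=
  ∀ i j k : Fin 4, i ≠ j → i ≠ k → j ≠ k → cross (p i) (p j) (p k) ≠ 0

/-- The Q-value of a quadrilateral: `|∑ i, sgn (cross (p (i-1)) (p i) (p (i+1)))|`. -/
noncomputable def Qvalue (p : Fin 4 → ℝ × ℝ) : ℝ :=
  |∑ i : Fin 4, Real.sign (cross (p (i - 1)) (p i) (p (i + 1)))|

private lemma aux_sign (v0 v1 v2 v3 : ℝ) (h0 : v0 ≠ 0) (h1 : v1 ≠ 0) (h2 : v2 ≠ 0)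
    (h3 : v3 ≠ 0) (hid : v1 + v3 = v0 + v2) :
    |Real.sign v0 + Real.sign v1 + Real.sign v2 + Real.sign v3| = 4 ↔
      0 < v0 * v2 ∧ 0 < v1 * v3 := by
  rcases h0.lt_or_gt with h0|h0 <;> rcases h1.lt_or_gt with h1|h1 <;>
    rcases h2.lt_or_gt with h2|h2 <;> rcases h3.lt_or_gt with h3|h3 <;>
    (try rw [Real.sign_of_neg h0]) <;> (try rw [Real.sign_of_pos h0]) <;>
    (try rw [Real.sign_of_neg h1]) <;> (try rw [Real.sign_of_pos h1]) <;>
    (try rw [Real.sign_of_neg h2]) <;> (try rw [Real.sign_of_pos h2]) <;>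
    (try rw [Real.sign_of_neg h3]) <;> (try rw [Real.sign_of_pos h3]) <;>
    norm_num <;>
    first
      | exact ⟨by nlinarith, by nlinarith⟩
      | (intro g1; nlinarith)
      | (rintro ⟨g1, g2⟩; nlinarith)
      | nlinarith

private lemma aux_seg_to (a b c d : ℝ × ℝ)
    (hA : 0 < cross d a b * cross b c d) (hB : 0 < cross a b c * cross c d a) :
    (openSegment ℝ a c ∩ openSegment ℝ b d).Nonempty := by
  set v0 := cross d a b with hv0
  set v1 := cross a b c with hv1
  set v2 := cross b c d with hv2
  set v3 := cross c d a with hv3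
  have hid : v1 + v3 = v0 + v2 := by
    simp only [hv0, hv1, hv2, hv3, cross]; ring
  set S := v1 + v3 with hS
  have hcoef : 0 < v0 / S ∧ 0 < v1 / S ∧ 0 < v2 / S ∧ 0 < v3 / S := by
    refine ⟨div_pos_iff.mpr ?_, div_pos_iff.mpr ?_, div_pos_iff.mpr ?_, div_pos_iff.mpr ?_⟩ <;>
      rcases mul_pos_iff.mp hB with ⟨g1, g3⟩|⟨g1, g3⟩ <;>
      rcases mul_pos_iff.mp hA with ⟨g0, g2⟩|⟨g0, g2⟩ <;>
      first
        | exact Or.inl ⟨by linarith, by linarith⟩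
        | exact Or.inr ⟨by linarith, by linarith⟩
  obtain ⟨hc0, hc1, hc2, hc3⟩ := hcoef
  have hSne : S ≠ 0 := by
    intro h
    rw [h, div_zero] at hc1
    exact lt_irrefl 0 hc1
  have hsum1 : v2 / S + v0 / S = 1 := by
    field_simp
    linarith
  have hsum2 : v3 / S + v1 / S = 1 := by
    field_simp
    linarith
  have pt1 : v2 * a.1 + v0 * c.1 = v3 * b.1 + v1 * d.1 := by
    simp only [hv0, hv1, hv2, hv3, cross]; ring
  have pt2 : v2 * a.2 + v0 * c.2 = v3 * b.2 + v1 * d.2 := by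
    simp only [hv0, hv1, hv2, hv3, cross]; ring
  refine ⟨(v2 / S) • a + (v0 / S) • c, ⟨v2 / S, v0 / S, hc2, hc0, hsum1, rfl⟩,
    ⟨v3 / S, v1 / S, hc3, hc1, hsum2, ?_⟩⟩
  apply Prod.ext <;>
    simp only [Prod.smul_fst, Prod.smul_snd, Prod.fst_add, Prod.snd_add, smul_eq_mul] <;>
    field_simp <;> linarith

private lemma aux_seg_from (a b c d : ℝ × ℝ)
    (h0 : cross d a b ≠ 0) (h1 : cross a b c ≠ 0)
    (h2 : cross b c d ≠ 0) (h3 : cross c d a ≠ 0)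
    (hne : (openSegment ℝ a c ∩ openSegment ℝ b d).Nonempty) :
    0 < cross d a b * cross b c d ∧ 0 < cross a b c * cross c d a := by
  obtain ⟨q, hq1, hq2⟩ := hne
  obtain ⟨s, t, hs, ht, hst, hq⟩ := hq1
  obtain ⟨u, w, hu, hw, huw, hq'⟩ := hq2
  have heq : s • a + t • c = u • b + w • d := hq.trans hq'.symm
  have E1 : s * a.1 + t * c.1 = u * b.1 + w * d.1 := by
    have := congrArg Prod.fst heq
    simpa only [Prod.smul_fst, Prod.fst_add, smul_eq_mul] using this
  have E2 : s * a.2 + t * c.2 = u * b.2 + w * d.2 := by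
    have := congrArg Prod.snd heq
    simpa only [Prod.smul_snd, Prod.snd_add, smul_eq_mul] using this
  have key1 : u * cross a b c = w * cross c d a := by
    simp only [cross]
    linear_combination (a.2 - c.2) * E1 + (c.1 - a.1) * E2 +
      (a.2 * c.1 - a.1 * c.2) * huw - (a.2 * c.1 - a.1 * c.2) * hst
  have key2 : s * cross d a b = t * cross b c d := by
    simp only [cross]
    linear_combination (b.2 - d.2) * E1 + (d.1 - b.1) * E2 +
      (b.2 * d.1 - b.1 * d.2) * huw - (b.2 * d.1 - b.1 * d.2) * hst
  constructor
  · have key2' : s * (cross d a b * cross b c d) = t * (cross b c d * cross b c d) := by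
      linear_combination cross b c d * key2
    have hpos : 0 < t * (cross b c d * cross b c d) :=
      mul_pos ht (mul_self_pos.mpr h2)
    nlinarith [key2', hpos, hs]
  · have key1' : u * (cross a b c * cross c d a) = w * (cross c d a * cross c d a) := by
      linear_combination cross c d a * key1
    have hpos : 0 < w * (cross c d a * cross c d a) :=
      mul_pos hw (mul_self_pos.mpr h3)
    nlinarith [key1', hpos, hu]

theorem Qvalue_eq_four_iff_convex (p : Fin 4 → ℝ × ℝ)
    (hp : GeneralPosition p) :
    Qvalue p = 4 ↔
      openSegment ℝ (p 0) (p 2) ∩ openSegment ℝ (p 1) (p 3) ≠ ∅ := by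
  have hv0 : cross (p 3) (p 0) (p 1) ≠ 0 := hp 3 0 1 (by decide) (by decide) (by decide)
  have hv1 : cross (p 0) (p 1) (p 2) ≠ 0 := hp 0 1 2 (by decide) (by decide) (by decide)
  have hv2 : cross (p 1) (p 2) (p 3) ≠ 0 := hp 1 2 3 (by decide) (by decide) (by decide)
  have hv3 : cross (p 2) (p 3) (p 0) ≠ 0 := hp 2 3 0 (by decide) (by decide) (by decide)
  have hid : cross (p 0) (p 1) (p 2) + cross (p 2) (p 3) (p 0) =
      cross (p 3) (p 0) (p 1) + cross (p 1) (p 2) (p 3) := by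
    simp only [cross]; ring
  have hsum : Qvalue p = |Real.sign (cross (p 3) (p 0) (p 1)) +
      Real.sign (cross (p 0) (p 1) (p 2)) + Real.sign (cross (p 1) (p 2) (p 3)) +
      Real.sign (cross (p 2) (p 3) (p 0))| := by
    unfold Qvalue
    rw [Fin.sum_univ_four]
    simp only [show (0 : Fin 4) - 1 = 3 by decide, show (0 : Fin 4) + 1 = 1 by decide,
      show (1 : Fin 4) - 1 = 0 by decide, show (1 : Fin 4) + 1 = 2 by decide,
      show (2 : Fin 4) - 1 = 1 by decide, show (2 : Fin 4) + 1 = 3 by decide,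
      show (3 : Fin 4) - 1 = 2 by decide, show (3 : Fin 4) + 1 = 0 by decide]
  rw [hsum, aux_sign _ _ _ _ hv0 hv1 hv2 hv3 hid, ← Set.nonempty_iff_ne_empty]
  constructor
  · rintro ⟨hA, hB⟩
    exact aux_seg_to (p 0) (p 1) (p 2) (p 3) hA hB
  · intro hne
    exact aux_seg_from (p 0) (p 1) (p 2) (p 3) hv0 hv1 hv2 hv3 hne
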